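/- arXiv:2104.09246 — 2 statements merged into one kernel-verified Lean document; each statement's English description precedes it below -/
import Mathlib

section
/- For the Chebyshev points of the second kind x_i = −cos(iπ/n), i = 0,…,n, the barycentric weights λ_i = Π_{j≠i} 1/(x_i − x_j) satisfy λ_i = c·(−1)^i δ_i for some nonzero constant c independent of i, where δ_i = 1/2 for i = 0 and i = n, and δ_i = 1 otherwise. -/
/-!
The polynomial `p = (1 - X²) T_n'` has degree `n + 1` and vanishes at all `n + 1` points `x_i`
(at `±1` through the factor `1 - X²`, in between because `x_i` is an extremum of `T_n`), so
`p = a · ∏ⱼ (X - x_j)` and `λ_i = a / p'(x_i)`. Chebyshev's differential equation gives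
`p' = -X T_n' - n² T_n`, and `T_n(x_i) = (-1)^(n+i)`. At interior points `T_n'(x_i) = 0`, while at
`x = ±1` the same equation gives `x T_n'(x) = n² T_n(x)`, which doubles `p'(x)`. Hence
`p'(x_i) = -n² (-1)^(n+i) / δ_i`.
-/

open Finset Real Polynomial

namespace Lagrange

variable {ι : Type*} {s : Finset ι}

theorem eq_C_coeff_card_mul_nodal {R : Type*} [CommRing R] [IsDomain R] {v : ι → R} {p : R[X]}
    (hvs : Set.InjOn v s) (hp : p.degree ≤ #s) (hroot : ∀ i ∈ s, p.eval (v i) = 0) :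
    p = C (p.coeff #s) * nodal s v := by
  refine eq_of_degree_sub_lt_of_eval_index_eq s hvs ?_ fun i hi => by
    rw [eval_mul, eval_nodal_at_node hi, mul_zero, hroot i hi]
  rw [degree_lt_iff_coeff_zero]
  intro m hm
  rw [coeff_sub, coeff_C_mul, sub_eq_zero]
  rcases hm.eq_or_lt with rfl | hm
  · rw [← natDegree_nodal (v := v), nodal_monic.coeff_natDegree, mul_one]
  · have hpm : p.degree < m := hp.trans_lt (by exact_mod_cast hm)
    have hnm : (nodal s v).natDegree < m := natDegree_nodal (v := v) ▸ hm
    rw [coeff_eq_zero_of_degree_lt hpm, coeff_eq_zero_of_natDegree_lt hnm, mul_zero]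

theorem nodalWeight_mul_eval_derivative {F : Type*} [Field F] [DecidableEq ι] {v : ι → F}
    {p : F[X]} (hvs : Set.InjOn v s) (hp : p.degree ≤ #s) (hroot : ∀ i ∈ s, p.eval (v i) = 0)
    {i : ι} (hi : i ∈ s) : nodalWeight s v i * (derivative p).eval (v i) = p.coeff #s := by
  have hw := nodalWeight_ne_zero hvs hi
  rw [nodalWeight_eq_eval_derivative_nodal hi, ne_eq, inv_eq_zero] at hw
  conv_lhs => rw [eq_C_coeff_card_mul_nodal hvs hp hroot]
  rw [nodalWeight_eq_eval_derivative_nodal hi, derivative_C_mul, eval_mul, eval_C, mul_left_comm,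
    inv_mul_cancel₀ hw, mul_one]

theorem exists_ne_zero_nodalWeight_eq_mul {F : Type*} [Field F] [DecidableEq ι] {v : ι → F}
    {p : F[X]} {K : F} {w : ι → F} (hK : K ≠ 0) (hs : s.Nonempty) (hvs : Set.InjOn v s)
    (hp : p.degree ≤ #s) (hroot : ∀ i ∈ s, p.eval (v i) = 0)
    (hw : ∀ i ∈ s, (derivative p).eval (v i) * w i = K) :
    ∃ c ≠ 0, ∀ i ∈ s, nodalWeight s v i = c * w i := by
  obtain ⟨i₀, hi₀⟩ := hs
  refine ⟨p.coeff #s / K, div_ne_zero ?_ hK, fun i hi => ?_⟩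
  · rw [← nodalWeight_mul_eval_derivative hvs hp hroot hi₀]
    exact mul_ne_zero (nodalWeight_ne_zero hvs hi₀) (left_ne_zero_of_mul (hw i₀ hi₀ ▸ hK))
  · rw [div_mul_eq_mul_div, eq_div_iff hK, ← hw i hi,
      ← nodalWeight_mul_eval_derivative hvs hp hroot hi]
    ring

end Lagrange

namespace Polynomial.Chebyshev

section CommRing

variable {R : Type*} [CommRing R]

theorem derivative_one_sub_X_sq_mul_derivative_T (n : ℤ) :
    derivative ((1 - X ^ 2) * derivative (T R n)) =
      -(X * derivative (T R n)) - (n ^ 2 : R[X]) * T R n := by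
  have h := one_sub_X_sq_mul_derivative_derivative_T_eq_poly_in_T (R := R) n
  rw [Function.iterate_succ_apply, Function.iterate_one] at h
  rw [derivative_mul, h, derivative_sub, derivative_one, derivative_X_sq,
    map_ofNat Polynomial.C 2]
  ring

theorem mul_eval_derivative_T_of_sq_eq_one (n : ℤ) {x : R} (hx : x ^ 2 = 1) :
    x * (derivative (T R n)).eval x = n ^ 2 * (T R n).eval x := by
  have h := congrArg (eval x) (one_sub_X_sq_mul_derivative_derivative_T_eq_poly_in_T (R := R) n)
  simp only [eval_mul, eval_sub, eval_one, eval_pow, eval_X, eval_intCast, hx, sub_self,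
    zero_mul] at h
  linear_combination -h

theorem natDegree_one_sub_X_sq_mul_derivative_T_le [IsDomain R] [NeZero (2 : R)] {n : ℕ}
    (hn : n ≠ 0) : ((1 - X ^ 2) * derivative (T R n)).natDegree ≤ n + 1 := by
  have h₁ : (1 - X ^ 2 : R[X]).natDegree ≤ 2 := (natDegree_sub_le _ _).trans (by simp)
  have h₂ := natDegree_derivative_le (T R n)
  rw [natDegree_T, Int.natAbs_natCast] at h₂
  exact natDegree_mul_le.trans (by omega)

end CommRing

variable {n i : ℕ}

theorem eval_T_real_neg_cos_nat_mul_pi_div (hn : n ≠ 0) (i : ℕ) :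
    (T ℝ n).eval (-cos (i * π / n)) = (-1) ^ n * (-1) ^ i := by
  have hθ : ((n : ℤ) : ℝ) * (π - i * π / n) = n * π - i * π := by push_cast; field_simp
  rw [← cos_pi_sub, T_real_cos, hθ, cos_sub, cos_nat_mul_pi, cos_nat_mul_pi, sin_nat_mul_pi,
    zero_mul, add_zero]

theorem eval_derivative_T_real_neg_cos_nat_mul_pi_div (hi₀ : 0 < i) (hin : i < n) :
    (derivative (T ℝ n)).eval (-cos (i * π / n)) = 0 := by
  have hn : (0 : ℝ) < n := by exact_mod_cast hi₀.trans hin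
  have hsin : sin (i * π / n) ≠ 0 := by
    refine (sin_pos_of_pos_of_lt_pi (by positivity) ?_).ne'
    rw [div_lt_iff₀ hn, mul_comm]
    gcongr
  have hθ : (((n : ℤ) - 1 : ℤ) + 1 : ℝ) * (π - i * π / n) = n * π - i * π := by
    push_cast; field_simp; ring
  have hU := U_real_cos (π - i * π / n) ((n : ℤ) - 1)
  rw [cos_pi_sub, sin_pi_sub, hθ, sin_sub, sin_nat_mul_pi, sin_nat_mul_pi, zero_mul, mul_zero,
    sub_zero] at hU
  rw [T_derivative_eq_U, eval_mul, (mul_eq_zero.mp hU).resolve_right hsin, mul_zero]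

theorem eval_one_sub_X_sq_mul_derivative_T_real_neg_cos_nat_mul_pi_div (hi : i ≤ n) :
    ((1 - X ^ 2) * derivative (T ℝ n)).eval (-cos (i * π / n)) = 0 := by
  rw [eval_mul]
  obtain rfl | ⟨rfl, hn⟩ | ⟨hi₀, hin⟩ : i = 0 ∨ (i = n ∧ n ≠ 0) ∨ (0 < i ∧ i < n) := by omega
  · simp
  · simp [hn]
  · rw [eval_derivative_T_real_neg_cos_nat_mul_pi_div hi₀ hin, mul_zero]

theorem eval_derivative_one_sub_X_sq_mul_derivative_T_real_neg_cos_mul_sign (hn : n ≠ 0)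
    (hi : i ≤ n) :
    (derivative ((1 - X ^ 2) * derivative (T ℝ n))).eval (-cos (i * π / n)) *
      ((-1) ^ i * if i = 0 ∨ i = n then 1 / 2 else 1) = -(n ^ 2 * (-1) ^ n) := by
  have hsq : ((-1 : ℝ) ^ i) ^ 2 = 1 := by rw [← pow_mul, pow_mul', neg_one_sq, one_pow]
  rw [derivative_one_sub_X_sq_mul_derivative_T]
  simp only [eval_sub, eval_neg, eval_mul, eval_X, eval_pow, eval_natCast, Int.cast_natCast]
  rw [eval_T_real_neg_cos_nat_mul_pi_div hn]
  split_ifs with hend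
  · have hx : (-cos (i * π / n)) ^ 2 = 1 := by
      rcases hend with rfl | rfl <;> simp [hn]
    rw [mul_eval_derivative_T_of_sq_eq_one _ hx, eval_T_real_neg_cos_nat_mul_pi_div hn]
    linear_combination (-(n : ℝ) ^ 2 * (-1) ^ n) * hsq
  · rw [eval_derivative_T_real_neg_cos_nat_mul_pi_div (by omega) (by omega)]
    linear_combination (-(n : ℝ) ^ 2 * (-1) ^ n) * hsq

end Polynomial.Chebyshev

open Polynomial.Chebyshev in
/-- the barycentric weights for Chebyshev points of the second kind
`x i = -cos (i π / n)` are proportional to `(-1)^i δ_i` with `δ_i = 1/2` at the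
endpoints and `1` otherwise. -/
theorem chebyshev_weights (n : ℕ) (hn : 1 ≤ n)
    (x : Fin (n+1) → ℝ) (hx : ∀ i, x i = -Real.cos (i * π / n))
    (lam : Fin (n+1) → ℝ)
    (hlam : ∀ i, lam i = ∏ j ∈ univ.filter (· ≠ i), (1 / (x i - x j))) :
    ∃ c : ℝ, c ≠ 0 ∧ ∀ i : Fin (n+1),
      lam i = c * (-1 : ℝ)^(i : ℕ) * (if (i : ℕ) = 0 ∨ (i : ℕ) = n then (1:ℝ)/2 else 1) := by
  have hn₀ : n ≠ 0 := by omega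
  set p : ℝ[X] := (1 - X ^ 2) * derivative (T ℝ n)
  have hinj : Set.InjOn x (univ : Finset (Fin (n + 1))) := fun i _ j _ hij =>
    Fin.ext <| (strictAntiOn_node n).injOn (by simp [i.is_le]) (by simp [j.is_le])
      (by simpa [hx, node] using hij)
  have hroot : ∀ i ∈ univ, p.eval (x i) = 0 := fun i _ => by
    rw [hx]; exact eval_one_sub_X_sq_mul_derivative_T_real_neg_cos_nat_mul_pi_div i.is_le
  have hdeg : p.degree ≤ #(univ : Finset (Fin (n + 1))) := by
    rw [card_univ, Fintype.card_fin]
    exact degree_le_of_natDegree_le (natDegree_one_sub_X_sq_mul_derivative_T_le hn₀)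
  have hsign : ∀ i ∈ univ, (derivative p).eval (x i) *
      ((-1) ^ (i : ℕ) * if (i : ℕ) = 0 ∨ (i : ℕ) = n then 1 / 2 else 1) = -(n ^ 2 * (-1) ^ n) :=
    fun i _ => by
      rw [hx]
      exact eval_derivative_one_sub_X_sq_mul_derivative_T_real_neg_cos_mul_sign hn₀ i.is_le
  obtain ⟨c, hc, hcw⟩ := Lagrange.exists_ne_zero_nodalWeight_eq_mul (by simp [hn₀])
    univ_nonempty hinj hdeg hroot hsign
  refine ⟨c, hc, fun i => ?_⟩
  rw [mul_assoc, ← hcw i (mem_univ i), hlam, Lagrange.nodalWeight, filter_ne']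
  simp only [one_div]
end

section
/- For n equispaced nodes θ_i = 2πi/n in [0,2π) and arbitrary data f_0,…,f_{n−1}, the function T_n(θ) = (Σ_{i=0}^{n−1} (−1)^i cst((θ−θ_i)/2) f_i) / (Σ_{i=0}^{n−1} (−1)^i cst((θ−θ_i)/2)), where cst = csc if n is odd and cst = cot if n is even, is the unique balanced trigonometric polynomial of degree ⌊n/2⌋ interpolating the data: T_n(θ_j) = f_j for all j. -/
open Finset Real

/-- `cst = csc` for `n` odd and `cst = cot` for `n` even. -/
noncomputable def cst (n : ℕ) (θ : ℝ) : ℝ :=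
  if n % 2 = 1 then 1 / Real.sin θ else Real.cos θ / Real.sin θ

/-- A balanced trigonometric polynomial of degree `⌊n/2⌋`: for `n` even the
leading `sin((n/2)θ)` coefficient vanishes. -/
def IsBalancedTrigPoly (n : ℕ) (T : ℝ → ℝ) : Prop :=
  ∃ a b : ℕ → ℝ, (n % 2 = 0 → b (n / 2) = 0) ∧
    ∀ θ : ℝ, T θ = ∑ k ∈ range (n / 2 + 1),
      (a k * Real.cos (k * θ) + b k * Real.sin (k * θ))



/-!
Let `m = ⌊n/2⌋`, `θⱼ = 2πj/n` and `K(φ) = (1/n) ∑_{q ≤ m} w_q cos qφ` with `w_q = 1` for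
`q = 0` and `q = n/2`, `w_q = 2` otherwise. Discrete orthogonality of `cos qθⱼ`, `sin qθⱼ` over
the nodes shows that `K` reproduces balanced trigonometric polynomials,
`T θ = ∑ⱼ T θⱼ · K (θ - θⱼ)`, which gives uniqueness; `∑ⱼ fⱼ K (θ - θⱼ)` is then the
interpolant. Telescoping the Dirichlet kernel gives `n K(φ) = sin (nφ/2) cst (φ/2)`, and as
`sin (n(θ - θⱼ)/2) = (-1)ʲ sin (nθ/2)`, the interpolant is the barycentric quotient once the
common factor `sin (nθ/2)` is cancelled using `∑ⱼ K (θ - θⱼ) = 1`.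
-/

noncomputable def trigNode (n j : ℕ) : ℝ := 2 * π * j / n

lemma exp_mul_trigNode_mul_I (n j : ℕ) (d : ℤ) :
    Complex.exp (↑(d * trigNode n j) * Complex.I)
      = (Complex.exp (2 * π * Complex.I / n) ^ d) ^ j := by
  rw [← Complex.exp_int_mul, ← Complex.exp_nat_mul, trigNode]
  push_cast
  ring_nf

lemma sum_exp_mul_trigNode_mul_I {n : ℕ} (hn : n ≠ 0) (d : ℤ) :
    ∑ j ∈ range n, Complex.exp (↑(d * trigNode n j) * Complex.I)
      = if (n : ℤ) ∣ d then (n : ℂ) else 0 := by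
  simp only [exp_mul_trigNode_mul_I]
  have hζ := Complex.isPrimitiveRoot_exp n hn
  set ζ := Complex.exp (2 * π * Complex.I / n)
  split_ifs with hd
  · simp [(hζ.zpow_eq_one_iff_dvd d).2 hd]
  · have hpow : (ζ ^ d) ^ n = 1 := by
      rw [← zpow_natCast, ← zpow_mul, mul_comm, zpow_mul, zpow_natCast, hζ.pow_eq_one, one_zpow]
    rw [geom_sum_eq (mt (hζ.zpow_eq_one_iff_dvd d).1 hd), hpow, sub_self, zero_div]

lemma sum_cos_mul_trigNode {n : ℕ} (hn : n ≠ 0) (d : ℤ) :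
    ∑ j ∈ range n, cos (d * trigNode n j) = if (n : ℤ) ∣ d then (n : ℝ) else 0 := by
  have h := congrArg Complex.re (sum_exp_mul_trigNode_mul_I hn d)
  simp only [Complex.re_sum, Complex.exp_ofReal_mul_I_re] at h
  rw [h]
  split_ifs <;> simp

lemma sum_sin_mul_trigNode {n : ℕ} (hn : n ≠ 0) (d : ℤ) :
    ∑ j ∈ range n, sin (d * trigNode n j) = 0 := by
  have h := congrArg Complex.im (sum_exp_mul_trigNode_mul_I hn d)
  simp only [Complex.im_sum, Complex.exp_ofReal_mul_I_im] at h
  rw [h]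
  split_ifs <;> simp

noncomputable def trigWeight (n q : ℕ) : ℝ := if q = 0 ∨ 2 * q = n then 1 else 2

lemma trigWeight_ne_zero (n q : ℕ) : trigWeight n q ≠ 0 := by
  unfold trigWeight; split_ifs <;> norm_num

lemma natCast_dvd_sub_iff {n p q : ℕ} (hp : p ≤ n / 2) (hq : q ≤ n / 2) :
    (n : ℤ) ∣ (p : ℤ) - q ↔ p = q := by
  refine ⟨fun h => ?_, fun h => by simp [h]⟩
  by_contra hpq
  have := Int.eq_zero_of_abs_lt_dvd h (by rw [abs_lt]; omega)
  omega

lemma natCast_dvd_add_iff {n p q : ℕ} (hp : p ≤ n / 2) (hq : q ≤ n / 2) :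
    (n : ℤ) ∣ (p : ℤ) + q ↔ p = q ∧ (q = 0 ∨ 2 * q = n) := by
  constructor
  · intro h
    by_cases hpq : p + q = n
    · omega
    · have := Int.eq_zero_of_abs_lt_dvd h (by rw [abs_lt]; omega)
      omega
  · rintro ⟨rfl, rfl | hq⟩
    · simp
    · exact ⟨1, by omega⟩

lemma cos_mul_cos_eq (a b x : ℝ) :
    cos (a * x) * cos (b * x) = (cos ((a - b) * x) + cos ((a + b) * x)) / 2 := by
  rw [sub_mul, add_mul, cos_sub, cos_add]; ring

lemma sin_mul_sin_eq (a b x : ℝ) :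
    sin (a * x) * sin (b * x) = (cos ((a - b) * x) - cos ((a + b) * x)) / 2 := by
  rw [sub_mul, add_mul, cos_sub, cos_add]; ring

lemma sin_mul_cos_eq (a b x : ℝ) :
    sin (a * x) * cos (b * x) = (sin ((a + b) * x) + sin ((a - b) * x)) / 2 := by
  rw [sub_mul, add_mul, sin_sub, sin_add]; ring

lemma sum_cos_mul_cos_trigNode {n p q : ℕ} (hn : n ≠ 0) (hp : p ≤ n / 2) (hq : q ≤ n / 2) :
    ∑ j ∈ range n, cos (p * trigNode n j) * cos (q * trigNode n j)
      = if p = q then n / trigWeight n q else 0 := by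
  simp only [cos_mul_cos_eq]
  rw [← sum_div, sum_add_distrib]
  have hsub := sum_cos_mul_trigNode hn ((p : ℤ) - q)
  have hadd := sum_cos_mul_trigNode hn ((p : ℤ) + q)
  push_cast at hsub hadd
  rw [hsub, hadd, trigWeight]
  simp only [natCast_dvd_sub_iff hp hq, natCast_dvd_add_iff hp hq]
  by_cases hpq : p = q <;> by_cases hw : q = 0 ∨ 2 * q = n <;> simp [hpq, hw]

lemma sum_sin_mul_sin_trigNode {n p q : ℕ} (hn : n ≠ 0) (hp : p ≤ n / 2) (hq : q ≤ n / 2) :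
    ∑ j ∈ range n, sin (p * trigNode n j) * sin (q * trigNode n j)
      = if p = q ∧ ¬(q = 0 ∨ 2 * q = n) then (n : ℝ) / 2 else 0 := by
  simp only [sin_mul_sin_eq]
  rw [← sum_div, sum_sub_distrib]
  have hsub := sum_cos_mul_trigNode hn ((p : ℤ) - q)
  have hadd := sum_cos_mul_trigNode hn ((p : ℤ) + q)
  push_cast at hsub hadd
  rw [hsub, hadd]
  simp only [natCast_dvd_sub_iff hp hq, natCast_dvd_add_iff hp hq]
  by_cases hpq : p = q <;> by_cases hw : q = 0 ∨ 2 * q = n <;> simp [hpq, hw]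

lemma sum_sin_mul_cos_trigNode {n : ℕ} (hn : n ≠ 0) (p q : ℕ) :
    ∑ j ∈ range n, sin (p * trigNode n j) * cos (q * trigNode n j) = 0 := by
  simp only [sin_mul_cos_eq]
  rw [← sum_div, sum_add_distrib]
  have hadd := sum_sin_mul_trigNode hn ((p : ℤ) + q)
  have hsub := sum_sin_mul_trigNode hn ((p : ℤ) - q)
  push_cast at hsub hadd
  rw [hsub, hadd]
  simp

noncomputable def trigKernel (n : ℕ) (φ : ℝ) : ℝ :=
  ∑ q ∈ range (n / 2 + 1), trigWeight n q / n * cos (q * φ)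

noncomputable def trigInterpolant (n : ℕ) (y : ℕ → ℝ) (θ : ℝ) : ℝ :=
  ∑ j ∈ range n, y j * trigKernel n (θ - trigNode n j)

lemma trigInterpolant_eq_sum (n : ℕ) (y : ℕ → ℝ) (θ : ℝ) :
    trigInterpolant n y θ = ∑ p ∈ range (n / 2 + 1), trigWeight n p / n *
      ((∑ j ∈ range n, y j * cos (p * trigNode n j)) * cos (p * θ)
        + (∑ j ∈ range n, y j * sin (p * trigNode n j)) * sin (p * θ)) := by
  simp only [trigInterpolant, trigKernel, mul_sub, cos_sub, mul_sum, sum_mul]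
  rw [sum_comm]
  refine sum_congr rfl fun p _ => ?_
  rw [← sum_add_distrib, mul_sum]
  exact sum_congr rfl fun j _ => by ring

lemma trigInterpolant_cos {n q : ℕ} (hn : n ≠ 0) (hq : q ≤ n / 2) (θ : ℝ) :
    trigInterpolant n (fun j => cos (q * trigNode n j)) θ = cos (q * θ) := by
  have hcos : ∀ p ∈ range (n / 2 + 1),
      ∑ j ∈ range n, cos (q * trigNode n j) * cos (p * trigNode n j)
        = if q = p then n / trigWeight n p else 0 := fun p hp =>
    sum_cos_mul_cos_trigNode hn hq (Nat.lt_succ_iff.1 (mem_range.1 hp))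
  have hsin : ∀ p : ℕ, ∑ j ∈ range n, cos (q * trigNode n j) * sin (p * trigNode n j) = 0 := by
    intro p
    simp only [mul_comm (cos _)]
    exact sum_sin_mul_cos_trigNode hn p q
  rw [trigInterpolant_eq_sum, sum_congr rfl fun p hp => by rw [hcos p hp, hsin p]]
  simp only [zero_mul, add_zero, ite_mul, zero_mul, mul_ite, mul_zero, sum_ite_eq,
    mem_range.2 (Nat.lt_succ_of_le hq), if_true]
  field_simp [trigWeight_ne_zero]

lemma trigInterpolant_sin {n q : ℕ} (hn : n ≠ 0) (hq : q ≤ n / 2) (hqn : 2 * q ≠ n) (θ : ℝ) :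
    trigInterpolant n (fun j => sin (q * trigNode n j)) θ = sin (q * θ) := by
  rcases Nat.eq_zero_or_pos q with rfl | hq0
  · simp [trigInterpolant]
  have hcos : ∀ p : ℕ, ∑ j ∈ range n, sin (q * trigNode n j) * cos (p * trigNode n j) = 0 :=
    sum_sin_mul_cos_trigNode hn q
  have hsin : ∀ p ∈ range (n / 2 + 1),
      ∑ j ∈ range n, sin (q * trigNode n j) * sin (p * trigNode n j)
        = if q = p then (n : ℝ) / 2 else 0 := by
    intro p hp
    rw [sum_sin_mul_sin_trigNode hn hq (Nat.lt_succ_iff.1 (mem_range.1 hp))]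
    by_cases hpq : q = p
    · subst hpq; simp [hq0.ne', hqn]
    · simp [hpq]
  have hw : trigWeight n q = 2 := by simp [trigWeight]; omega
  rw [trigInterpolant_eq_sum, sum_congr rfl fun p hp => by rw [hcos p, hsin p hp]]
  simp only [zero_mul, zero_add, ite_mul, zero_mul, mul_ite, mul_zero, sum_ite_eq,
    mem_range.2 (Nat.lt_succ_of_le hq), if_true, hw]
  field_simp

lemma IsBalancedTrigPoly.eq_trigInterpolant {n : ℕ} {T : ℝ → ℝ} (hn : n ≠ 0)
    (hT : IsBalancedTrigPoly n T) (θ : ℝ) :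
    T θ = trigInterpolant n (fun j => T (trigNode n j)) θ := by
  obtain ⟨a, b, hb, hT⟩ := hT
  have hterm : ∀ q ∈ range (n / 2 + 1), a q * cos (q * θ) + b q * sin (q * θ)
      = a q * trigInterpolant n (fun j => cos (q * trigNode n j)) θ
        + b q * trigInterpolant n (fun j => sin (q * trigNode n j)) θ := by
    intro q hq
    have hq : q ≤ n / 2 := Nat.lt_succ_iff.1 (mem_range.1 hq)
    rw [trigInterpolant_cos hn hq]
    by_cases hqn : 2 * q = n
    · rw [show b q = 0 from (show q = n / 2 by omega) ▸ hb (by omega)]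
      simp
    · rw [trigInterpolant_sin hn hq hqn]
  rw [hT θ, sum_congr rfl hterm]
  simp only [trigInterpolant, hT, sum_mul, mul_sum, ← sum_add_distrib]
  rw [sum_comm]
  exact sum_congr rfl fun j _ => sum_congr rfl fun q _ => by ring

lemma isBalancedTrigPoly_trigInterpolant (n : ℕ) (y : ℕ → ℝ) :
    IsBalancedTrigPoly n (trigInterpolant n y) := by
  refine ⟨fun p => trigWeight n p / n * ∑ j ∈ range n, y j * cos (p * trigNode n j),
    fun p => trigWeight n p / n * ∑ j ∈ range n, y j * sin (p * trigNode n j), ?_,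
    fun θ => by rw [trigInterpolant_eq_sum]; exact sum_congr rfl fun p _ => by ring⟩
  intro hn
  rcases eq_or_ne n 0 with rfl | hn0
  · simp
  suffices h : ∀ j, sin ((n / 2 : ℕ) * trigNode n j) = 0 by simp [h]
  intro j
  rw [trigNode, show ((n / 2 : ℕ) : ℝ) * (2 * π * j / n) = j * π by
    rw [Nat.cast_div (Nat.dvd_of_mod_eq_zero hn) two_ne_zero]; push_cast; field_simp]
  exact sin_nat_mul_pi j

lemma sin_half_mul_sum_cos (M : ℕ) (φ : ℝ) :
    sin (φ / 2) * ∑ q ∈ range (M + 1), (if q = 0 then 1 else 2) * cos (q * φ)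
      = sin ((M + 1 / 2) * φ) := by
  induction M with
  | zero => norm_num [div_eq_inv_mul]
  | succ M ih =>
    rw [sum_range_succ, mul_add, ih, if_neg M.succ_ne_zero]
    have h₁ : ((M + 1 : ℕ) + 1 / 2 : ℝ) * φ = (M + 1 : ℕ) * φ + φ / 2 := by push_cast; ring
    have h₂ : (M + 1 / 2 : ℝ) * φ = (M + 1 : ℕ) * φ - φ / 2 := by push_cast; ring
    rw [h₁, h₂, sin_add, sin_sub]
    ring

lemma natCast_mul_trigKernel {n : ℕ} (hn : n ≠ 0) (φ : ℝ) :
    n * trigKernel n φ = ∑ q ∈ range (n / 2 + 1), trigWeight n q * cos (q * φ) := by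
  rw [trigKernel, mul_sum]
  exact sum_congr rfl fun q _ => by field_simp

lemma sin_half_mul_natCast_mul_trigKernel {n : ℕ} (hn : n ≠ 0) (φ : ℝ) :
    sin (φ / 2) * (n * trigKernel n φ)
      = sin (n * φ / 2) * (if n % 2 = 1 then 1 else cos (φ / 2)) := by
  rw [natCast_mul_trigKernel hn]
  obtain ⟨m, rfl | rfl⟩ := Nat.even_or_odd' n
  · have hm : m ≠ 0 := by omega
    have hw : ∀ q ∈ range m, trigWeight (2 * m) q = if q = 0 then 1 else 2 := by
      intro q hq
      have := mem_range.1 hq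
      simp only [trigWeight]
      split_ifs <;> first | rfl | omega
    have hD := sin_half_mul_sum_cos m φ
    rw [sum_range_succ, if_neg hm, show (m + 1 / 2 : ℝ) * φ = m * φ + φ / 2 by ring,
      sin_add] at hD
    rw [show 2 * m / 2 = m by omega, sum_range_succ, sum_congr rfl fun q hq => by rw [hw q hq],
      if_neg (by omega),
      show trigWeight (2 * m) m = 1 by simp [trigWeight],
      show ((2 * m : ℕ) : ℝ) * φ / 2 = m * φ by push_cast; ring]
    linear_combination hD
  · have hw : ∀ q ∈ range (m + 1), trigWeight (2 * m + 1) q = if q = 0 then 1 else 2 := by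
      intro q _
      simp only [trigWeight]
      split_ifs <;> first | rfl | omega
    rw [show (2 * m + 1) / 2 = m by omega, sum_congr rfl fun q hq => by rw [hw q hq],
      sin_half_mul_sum_cos, if_pos (by omega), mul_one]
    congr 1
    push_cast
    ring

lemma trigKernel_eq {n : ℕ} (hn : n ≠ 0) {φ : ℝ} (hφ : sin (φ / 2) ≠ 0) :
    trigKernel n φ = sin (n * φ / 2) * cst n (φ / 2) / n := by
  have h := sin_half_mul_natCast_mul_trigKernel hn φ
  have hnR : (n : ℝ) ≠ 0 := Nat.cast_ne_zero.2 hn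
  rw [cst]
  split_ifs at h ⊢ <;> field_simp <;> linear_combination h

lemma sin_half_sub_ne_zero {x y : ℝ} (hx : x ∈ Set.Ico 0 (2 * π)) (hy : y ∈ Set.Ico 0 (2 * π))
    (hxy : x ≠ y) : sin ((x - y) / 2) ≠ 0 := by
  obtain ⟨hx₀, hx₁⟩ := hx
  obtain ⟨hy₀, hy₁⟩ := hy
  rw [Ne, sin_eq_zero_iff_of_lt_of_lt (by linarith) (by linarith)]
  intro h
  exact hxy (by linarith)

lemma trigNode_mem_Ico {n j : ℕ} (hj : j < n) : trigNode n j ∈ Set.Ico 0 (2 * π) := by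
  have hn : (0 : ℝ) < n := by exact_mod_cast (Nat.zero_le j).trans_lt hj
  have hjn : (j : ℝ) < n := by exact_mod_cast hj
  refine ⟨by unfold trigNode; positivity, ?_⟩
  rw [trigNode, div_lt_iff₀ hn]
  nlinarith [pi_pos]

lemma trigNode_injective {n l j : ℕ} (hn : n ≠ 0) (h : trigNode n l = trigNode n j) : l = j := by
  have hnR : (n : ℝ) ≠ 0 := Nat.cast_ne_zero.2 hn
  unfold trigNode at h
  field_simp at h
  exact_mod_cast h

lemma sum_trigKernel_sub_trigNode {n : ℕ} (hn : n ≠ 0) (θ : ℝ) :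
    ∑ j ∈ range n, trigKernel n (θ - trigNode n j) = 1 := by
  simpa [trigInterpolant] using trigInterpolant_cos hn (Nat.zero_le _) θ

lemma trigKernel_trigNode_sub_trigNode {n l j : ℕ} (hl : l < n) (hj : j < n) (hlj : l ≠ j) :
    trigKernel n (trigNode n l - trigNode n j) = 0 := by
  have hn : n ≠ 0 := by omega
  rw [trigKernel_eq hn (sin_half_sub_ne_zero (trigNode_mem_Ico hl) (trigNode_mem_Ico hj)
    (mt (trigNode_injective hn) hlj))]
  have harg : (n : ℝ) * (trigNode n l - trigNode n j) / 2 = ((l : ℤ) - j : ℤ) * π := by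
    unfold trigNode; push_cast; field_simp
  rw [harg, sin_int_mul_pi, zero_mul, zero_div]

lemma trigInterpolant_trigNode {n l : ℕ} (hl : l < n) (y : ℕ → ℝ) :
    trigInterpolant n y (trigNode n l) = y l := by
  have hn : n ≠ 0 := by omega
  have hK : ∀ j ∈ range n, j ≠ l → trigKernel n (trigNode n l - trigNode n j) = 0 :=
    fun j hj hjl => trigKernel_trigNode_sub_trigNode hl (mem_range.1 hj) (Ne.symm hjl)
  have hl' : l ∈ range n := mem_range.2 hl
  have hKl : trigKernel n (trigNode n l - trigNode n l) = 1 := by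
    rw [← sum_trigKernel_sub_trigNode hn (trigNode n l), sum_eq_single_of_mem l hl' hK]
  rw [trigInterpolant, sum_eq_single_of_mem l hl' fun j hj hjl => by rw [hK j hj hjl, mul_zero],
    hKl, mul_one]

lemma trigInterpolant_eq_barycentric {n : ℕ} (hn : n ≠ 0) (y : ℕ → ℝ) {θ : ℝ}
    (hθ : ∀ i < n, sin ((θ - trigNode n i) / 2) ≠ 0) :
    trigInterpolant n y θ
      = (∑ i ∈ range n, (-1) ^ i * cst n ((θ - trigNode n i) / 2) * y i)
        / ∑ i ∈ range n, (-1) ^ i * cst n ((θ - trigNode n i) / 2) := by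
  have hnR : (n : ℝ) ≠ 0 := Nat.cast_ne_zero.2 hn
  set s := sin (n * θ / 2) with hs_def
  have hK : ∀ i ∈ range n,
      n * trigKernel n (θ - trigNode n i) = s * ((-1) ^ i * cst n ((θ - trigNode n i) / 2)) := by
    intro i hi
    rw [trigKernel_eq hn (hθ i (mem_range.1 hi)),
      show (n : ℝ) * (θ - trigNode n i) / 2 = n * θ / 2 - i * π by unfold trigNode; field_simp,
      sin_sub_nat_mul_pi, ← hs_def]
    field_simp
  have hden : s * ∑ i ∈ range n, (-1) ^ i * cst n ((θ - trigNode n i) / 2) = n := by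
    rw [mul_sum, ← sum_congr rfl hK, ← mul_sum, sum_trigKernel_sub_trigNode hn, mul_one]
  have hnum : s * ∑ i ∈ range n, (-1) ^ i * cst n ((θ - trigNode n i) / 2) * y i
      = n * trigInterpolant n y θ := by
    rw [trigInterpolant, mul_sum, mul_sum]
    exact sum_congr rfl fun i hi => by
      rw [show (n : ℝ) * (y i * trigKernel n (θ - trigNode n i))
        = n * trigKernel n (θ - trigNode n i) * y i by ring, hK i hi]; ring
  have hs : s ≠ 0 := left_ne_zero_of_mul (hden ▸ hnR)
  have hD : ∑ i ∈ range n, (-1) ^ i * cst n ((θ - trigNode n i) / 2) ≠ 0 :=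
    right_ne_zero_of_mul (hden ▸ hnR)
  rw [eq_div_iff hD]
  apply mul_left_cancel₀ hs
  linear_combination trigInterpolant n y θ * hden - hnum

lemma trigInterpolant_congr {n : ℕ} {y z : ℕ → ℝ} (h : ∀ j < n, y j = z j) :
    trigInterpolant n y = trigInterpolant n z :=
  funext fun θ => sum_congr rfl fun j hj => by rw [h j (mem_range.1 hj)]

/-- the barycentric formula with `cst` weights represents the
unique balanced trigonometric interpolant at `n` equispaced nodes. -/
theorem trig_barycentric_interpolation (n : ℕ) (hn : 1 ≤ n) (f : Fin n → ℝ) :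
    ∃ T : ℝ → ℝ, IsBalancedTrigPoly n T ∧
      (∀ j : Fin n, T (2 * π * j / n) = f j) ∧
      (∀ T' : ℝ → ℝ, IsBalancedTrigPoly n T' →
        (∀ j : Fin n, T' (2 * π * j / n) = f j) → ∀ θ, T' θ = T θ) ∧
      (∀ θ ∈ Set.Ico (0:ℝ) (2*π), (∀ j : Fin n, θ ≠ 2 * π * j / n) →
        T θ = (∑ i ∈ range n, (-1:ℝ)^i * cst n ((θ - 2 * π * i / n) / 2) * f ⟨i % n, Nat.mod_lt _ hn⟩)
            / (∑ i ∈ range n, (-1:ℝ)^i * cst n ((θ - 2 * π * i / n) / 2))) := by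
  have hn₀ : n ≠ 0 := Nat.one_le_iff_ne_zero.1 hn
  let y : ℕ → ℝ := fun i => f ⟨i % n, Nat.mod_lt _ hn⟩
  have hy : ∀ j : Fin n, y j = f j := fun j => congrArg f (Fin.ext (Nat.mod_eq_of_lt j.isLt))
  refine ⟨trigInterpolant n y, isBalancedTrigPoly_trigInterpolant n y,
    fun j => (trigInterpolant_trigNode j.isLt y).trans (hy j), fun T' hT' hT'f θ => ?_,
    fun θ hθ hne => trigInterpolant_eq_barycentric hn₀ y fun i hi =>
      sin_half_sub_ne_zero hθ (trigNode_mem_Ico hi) (hne ⟨i, hi⟩)⟩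
  rw [hT'.eq_trigInterpolant hn₀ θ,
    trigInterpolant_congr fun j hj => (hT'f ⟨j, hj⟩).trans (hy ⟨j, hj⟩).symm]
end
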